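/- arXiv:0904.4497 — 2 statements merged into one kernel-verified Lean document; each statement's English description precedes it below -/
import Mathlib

section
/- Under hypotheses (H), there exists a constant D > 0 such that lim_{s→∞} f'(s)·s^{δ(n−p+2)} = D; that is, f'(s) is asymptotically equivalent to D·s^{−δ(n−(p−2))} as s → +∞. -/
open Real Filter Topology

/-- Squared energy density `|dF|²(s) = f'(s)² + n · j(f(s))² / g(s)²` of the rotationally
symmetric map `F(s,θ) = (f(s),θ)` between `M_g` and `N_j`. -/
noncomputable def energyDensitySq (n : ℕ) (g j f : ℝ → ℝ) (s : ℝ) : ℝ :=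
  (deriv f s) ^ 2 + (n : ℝ) * (j (f s)) ^ 2 / (g s) ^ 2

/-- `f` solves the rotationally symmetric `p`-harmonic equation `τ_p(F) = 0`. -/
def SolvesPHarmonic (n : ℕ) (p : ℝ) (g j f : ℝ → ℝ) : Prop :=
  ∀ s : ℝ, 0 < s → 0 < energyDensitySq n g j f s →
    deriv (deriv f) s
      + ((n : ℝ) / (g s) ^ 2) * (g s * deriv g s * deriv f s - j (f s) * deriv j (f s))
      + (p - 2) * (energyDensitySq n g j f s)⁻¹ * deriv f s *
          (deriv f s * deriv (deriv f) s
            + (n : ℝ) * (j (f s) / (g s) ^ 3) *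
                (deriv j (f s) * deriv f s * g s - j (f s) * deriv g s)) = 0

/-!
The equation is the divergence form `(g^n |dF|^(p-2) f')' = n g^(n-2) |dF|^(p-2) j(f) j'(f) ≥ 0`,
so the flux `H = g^n |dF|^(p-2) f'` increases. Since `f` increases to a limit `L > 0`, `j(f)` is
bounded; bounding `|dF|^(p-2)` by `f'^(p-2) ≤ (H / g^n)^((p-2)/(p-1))` and `(n M² / g²)^((p-2)/2)`,
and using `g ≍ s^δ`, gives `H' ≤ C s^(-δ(p-n)) H`. As `δ(p-n) > 1`, Gronwall bounds `H`, so `H`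
converges to some `l > 0`. Because `p < n + 1` this forces `f' g → 0`, hence `g² |dF|² → n j(L)²`,
and `f' s^(δ(n-p+2)) = H (g / s^δ)^(p-2-n) (g² |dF|²)^(-(p-2)/2)` tends to
`l C₁^(p-2-n) (n j(L)²)^(-(p-2)/2)`.
-/

open Set

namespace Real

lemma add_rpow_le_two_rpow_mul_rpow_add_rpow {x y q : ℝ} (hx : 0 ≤ x) (hy : 0 ≤ y)
    (hq : 0 ≤ q) : (x + y) ^ q ≤ 2 ^ q * (x ^ q + y ^ q) := calc
  (x + y) ^ q ≤ (2 * max x y) ^ q := by rw [two_mul]; gcongr <;> simp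
  _ = 2 ^ q * max x y ^ q := mul_rpow zero_le_two (hx.trans (le_max_left x y))
  _ ≤ 2 ^ q * (x ^ q + y ^ q) := by
    gcongr
    rcases le_total x y with h | h
    · simpa [max_eq_right h] using rpow_nonneg hx q
    · simpa [max_eq_left h] using rpow_nonneg hy q

lemma sq_rpow_div_two {x : ℝ} (hx : 0 ≤ x) (r : ℝ) : (x ^ 2) ^ (r / 2) = x ^ r := by
  rw [← rpow_two, ← rpow_mul hx]; ring_nf

end Real

lemma monotoneOn_Ioi_of_hasDerivAt_nonneg {h h' : ℝ → ℝ} {a : ℝ}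
    (hd : ∀ s > a, HasDerivAt h (h' s) s) (h'nonneg : ∀ s > a, 0 ≤ h' s) :
    MonotoneOn h (Ioi a) :=
  monotoneOn_of_hasDerivWithinAt_nonneg (convex_Ioi a)
    (fun s hs => (hd s hs).continuousAt.continuousWithinAt)
    (fun s hs => (hd s (interior_subset hs)).hasDerivWithinAt)
    fun s hs => h'nonneg s (interior_subset hs)

lemma exists_tendsto_of_monotoneOn_of_le {h : ℝ → ℝ} {s₀ B : ℝ} (hmono : MonotoneOn h (Ici s₀))
    (hB : ∀ s ≥ s₀, h s ≤ B) : ∃ l, h s₀ ≤ l ∧ Tendsto h atTop (𝓝 l) := by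
  have hmono' : Monotone (fun s => h (max s s₀)) := fun x y hxy =>
    hmono (le_max_right x s₀) (le_max_right y s₀) (max_le_max_right s₀ hxy)
  have hbdd : BddAbove (range fun s => h (max s s₀)) :=
    ⟨B, forall_mem_range.2 fun s => hB _ (le_max_right s s₀)⟩
  refine ⟨_, by simpa using le_ciSup hbdd s₀, (tendsto_atTop_ciSup hmono' hbdd).congr' ?_⟩
  filter_upwards [eventually_ge_atTop s₀] with s hs
  rw [max_eq_left hs]

lemma exists_pos_tendsto_of_deriv_nonneg {f : ℝ → ℝ} {B : ℝ} (hf : DifferentiableOn ℝ f (Ioi 0))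
    (hf' : ∀ s > 0, 0 ≤ deriv f s) (hpos : ∀ s > 0, 0 < f s) (hB : ∀ s > 0, f s ≤ B) :
    ∃ L, 0 < L ∧ Tendsto f atTop (𝓝 L) := by
  have hmono := monotoneOn_Ioi_of_hasDerivAt_nonneg
    (fun s hs => (hf.differentiableAt (Ioi_mem_nhds hs)).hasDerivAt) hf'
  obtain ⟨L, hL, hlim⟩ := exists_tendsto_of_monotoneOn_of_le (hmono.mono (Ici_subset_Ioi.2 one_pos))
    fun s hs => hB s (one_pos.trans_le hs)
  exact ⟨L, (hpos 1 one_pos).trans_le hL, hlim⟩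

lemma le_mul_exp_of_hasDerivAt_le_mul_rpow {h h' : ℝ → ℝ} {s₀ C γ : ℝ} (hs₀ : 0 < s₀)
    (hγ : 1 < γ) (hC : 0 ≤ C) (hpos : ∀ s ≥ s₀, 0 < h s) (hd : ∀ s ≥ s₀, HasDerivAt h (h' s) s)
    (hle : ∀ s ≥ s₀, h' s ≤ C * s ^ (-γ) * h s) {s : ℝ} (hs : s₀ ≤ s) :
    h s ≤ h s₀ * exp (C / (γ - 1) * s₀ ^ (1 - γ)) := by
  set K := C / (γ - 1)
  have hK : K * (1 - γ) = -C := by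
    simp only [K]; field_simp [(sub_pos.2 hγ).ne']; ring
  have hψ : ∀ x ≥ s₀, HasDerivAt (fun x => log (h x) + K * x ^ (1 - γ))
      ((h x)⁻¹ * h' x - C * x ^ (-γ)) x := fun x hx => by
    refine (((hasDerivAt_log (hpos x hx).ne').comp x (hd x hx)).add
      ((hasDerivAt_rpow_const (Or.inl (hs₀.trans_le hx).ne')).const_mul K)).congr_deriv ?_
    rw [← mul_assoc, hK, sub_sub_cancel_left]; ring
  have hanti : AntitoneOn (fun x => log (h x) + K * x ^ (1 - γ)) (Ici s₀) := by
    refine antitoneOn_of_hasDerivWithinAt_nonpos (convex_Ici s₀)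
      (fun x hx => (hψ x hx).continuousAt.continuousWithinAt)
      (fun x hx => (hψ x (interior_subset hx)).hasDerivWithinAt) fun x hx => ?_
    have hx : s₀ ≤ x := interior_subset hx
    rw [sub_nonpos, inv_mul_le_iff₀ (hpos x hx)]
    linarith [hle x hx]
  have hψs : log (h s) + K * s ^ (1 - γ) ≤ log (h s₀) + K * s₀ ^ (1 - γ) :=
    hanti self_mem_Ici hs hs
  have hKs : 0 ≤ K * s ^ (1 - γ) :=
    mul_nonneg (div_nonneg hC (sub_pos.2 hγ).le) (rpow_nonneg (hs₀.le.trans hs) _)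
  rw [← exp_log (hpos s hs), ← exp_log (hpos s₀ le_rfl), ← exp_add]
  exact exp_le_exp.2 (by linarith)

lemma exists_tendsto_of_hasDerivAt_le_mul_rpow {h h' : ℝ → ℝ} {s₀ C γ : ℝ} (hs₀ : 0 < s₀)
    (hγ : 1 < γ) (hC : 0 ≤ C) (hmono : MonotoneOn h (Ici s₀)) (hpos : 0 < h s₀)
    (hd : ∀ s ≥ s₀, HasDerivAt h (h' s) s) (hle : ∀ s ≥ s₀, h' s ≤ C * s ^ (-γ) * h s) :
    ∃ l, 0 < l ∧ Tendsto h atTop (𝓝 l) := by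
  obtain ⟨l, hl, hlim⟩ := exists_tendsto_of_monotoneOn_of_le hmono fun s hs =>
    le_mul_exp_of_hasDerivAt_le_mul_rpow hs₀ hγ hC
      (fun x hx => hpos.trans_le (hmono self_mem_Ici hx hx)) hd hle hs
  exact ⟨l, hpos.trans_le hl, hlim⟩

section
variable {g : ℝ → ℝ} {C₁ δ : ℝ}

lemma tendsto_atTop_of_tendsto_div_rpow (hC₁ : 0 < C₁) (hδ : 0 < δ)
    (hg : Tendsto (fun s => g s / (C₁ * s ^ δ)) atTop (𝓝 1)) : Tendsto g atTop atTop := by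
  refine (hg.pos_mul_atTop one_pos ((tendsto_rpow_atTop hδ).const_mul_atTop hC₁)).congr' ?_
  filter_upwards [eventually_gt_atTop 0] with s hs
  have : 0 < C₁ * s ^ δ := by positivity
  field_simp

lemma tendsto_div_rpow_of_tendsto_div_rpow (hC₁ : 0 < C₁)
    (hg : Tendsto (fun s => g s / (C₁ * s ^ δ)) atTop (𝓝 1)) :
    Tendsto (fun s => g s / s ^ δ) atTop (𝓝 C₁) := by
  have hC := hg.const_mul C₁
  rw [mul_one] at hC
  refine hC.congr' ?_
  filter_upwards [eventually_gt_atTop 0] with s hs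
  have : 0 < s ^ δ := by positivity
  field_simp

lemma eventually_rpow_le_of_tendsto_div_rpow {β : ℝ} (hC₁ : 0 < C₁) (hβ : β ≤ 0)
    (hg : Tendsto (fun s => g s / (C₁ * s ^ δ)) atTop (𝓝 1)) :
    ∀ᶠ s in atTop, g s ^ β ≤ (C₁ / 2) ^ β * s ^ (δ * β) := by
  filter_upwards [hg.eventually (lt_mem_nhds one_half_lt_one), eventually_gt_atTop 0]
    with s hgs hs
  rw [lt_div_iff₀ (by positivity)] at hgs
  rw [rpow_mul hs.le, ← mul_rpow (by positivity) (by positivity)]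
  exact rpow_le_rpow_of_nonpos (by positivity) (by linarith) hβ

end

/-- The radial `p`-flux `g^n |dF|^(p-2) f'`; the equation says that its derivative is
`pFluxDeriv`. -/
noncomputable def pFlux (n : ℕ) (p : ℝ) (g j f : ℝ → ℝ) (s : ℝ) : ℝ :=
  g s ^ n * energyDensitySq n g j f s ^ ((p - 2) / 2) * deriv f s

noncomputable def pFluxDeriv (n : ℕ) (p : ℝ) (g j f : ℝ → ℝ) (s : ℝ) : ℝ :=
  n * g s ^ n / g s ^ 2 * energyDensitySq n g j f s ^ ((p - 2) / 2) * (j (f s) * deriv j (f s))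

section
variable {n : ℕ} {p : ℝ} {g j f : ℝ → ℝ} {s : ℝ}

lemma energyDensitySq_pos (hf' : deriv f s ≠ 0) : 0 < energyDensitySq n g j f s := by
  unfold energyDensitySq; positivity

lemma sq_deriv_le_energyDensitySq : deriv f s ^ 2 ≤ energyDensitySq n g j f s := by
  unfold energyDensitySq
  have : 0 ≤ (n : ℝ) * j (f s) ^ 2 / g s ^ 2 := by positivity
  linarith

lemma energyDensitySq_mul_sq (hg : g s ≠ 0) :
    energyDensitySq n g j f s * g s ^ 2 = (deriv f s * g s) ^ 2 + n * j (f s) ^ 2 := by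
  unfold energyDensitySq; field_simp

lemma energyDensitySq_rpow_le {M : ℝ} (hp : 2 ≤ p) (hg : 0 < g s) (hf' : 0 ≤ deriv f s)
    (hJ : |j (f s)| ≤ M) :
    energyDensitySq n g j f s ^ ((p - 2) / 2) ≤
      2 ^ ((p - 2) / 2) * (deriv f s ^ (p - 2) + (n * M ^ 2) ^ ((p - 2) / 2) / g s ^ (p - 2)) := by
  have hq : 0 ≤ (p - 2) / 2 := by linarith
  have hE : energyDensitySq n g j f s ≤ deriv f s ^ 2 + n * M ^ 2 / g s ^ 2 := by
    have hJ2 : j (f s) ^ 2 ≤ M ^ 2 := by simpa using pow_le_pow_left₀ (abs_nonneg _) hJ 2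
    unfold energyDensitySq
    gcongr
  calc energyDensitySq n g j f s ^ ((p - 2) / 2)
      ≤ (deriv f s ^ 2 + n * M ^ 2 / g s ^ 2) ^ ((p - 2) / 2) :=
        rpow_le_rpow (by unfold energyDensitySq; positivity) hE hq
    _ ≤ 2 ^ ((p - 2) / 2) *
          ((deriv f s ^ 2) ^ ((p - 2) / 2) + (n * M ^ 2 / g s ^ 2) ^ ((p - 2) / 2)) :=
        add_rpow_le_two_rpow_mul_rpow_add_rpow (by positivity) (by positivity) hq
    _ = _ := by
      rw [div_rpow (by positivity) (by positivity), sq_rpow_div_two hf', sq_rpow_div_two hg.le]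

lemma pFlux_pos (hg : 0 < g s) (hf' : 0 < deriv f s) : 0 < pFlux n p g j f s := by
  have := energyDensitySq_pos (n := n) (g := g) (j := j) hf'.ne'
  unfold pFlux; positivity

lemma hasDerivAt_pFlux (hsol : SolvesPHarmonic n p g j f) (hs : 0 < s)
    (hg : DifferentiableAt ℝ g s) (hj : DifferentiableAt ℝ j (f s)) (hf : DifferentiableAt ℝ f s)
    (hf' : DifferentiableAt ℝ (deriv f) s) (hgs : g s ≠ 0)
    (hE : 0 < energyDensitySq n g j f s) :
    HasDerivAt (pFlux n p g j f) (pFluxDeriv n p g j f s) s := by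
  have hE' : HasDerivAt (energyDensitySq n g j f) (2 * (deriv f s * deriv (deriv f) s
      + n * (j (f s) / g s ^ 3) * (deriv j (f s) * deriv f s * g s - j (f s) * deriv g s))) s :=
    ((hf'.hasDerivAt.pow 2).add ((((hj.hasDerivAt.comp s hf.hasDerivAt).pow 2).const_mul
      (n : ℝ)).div (hg.hasDerivAt.pow 2) (pow_ne_zero 2 hgs))).congr_deriv (by
        simp only [Pi.pow_apply, Function.comp_apply]; field_simp; ring)
  have hgn : (n : ℝ) * g s ^ (n - 1) = n * g s ^ n / g s := by
    rcases n with _ | n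
    · simp
    · rw [pow_succ, mul_div_assoc, mul_div_cancel_right₀ _ hgs, Nat.add_sub_cancel]
  refine (((hg.hasDerivAt.pow n).mul (hE'.rpow_const (p := (p - 2) / 2) (Or.inl hE.ne'))).mul
    hf'.hasDerivAt).congr_deriv ?_
  simp only [pFluxDeriv, Pi.pow_apply, Pi.mul_apply]
  rw [hgn, rpow_sub_one hE.ne']
  linear_combination (norm := skip)
    (g s ^ n * energyDensitySq n g j f s ^ ((p - 2) / 2)) * hsol s hs hE
  field_simp
  ring

lemma hasDerivAt_pFlux_of_contDiffOn (hsol : SolvesPHarmonic n p g j f)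
    (hg : ContDiffOn ℝ 1 g (Ioi 0)) (hj : ContDiffOn ℝ 1 j (Ioi 0))
    (hf : ContDiffOn ℝ 2 f (Ioi 0)) (hgpos : ∀ s > 0, 0 < g s) (hfpos : ∀ s > 0, 0 < f s)
    (hf' : ∀ s > 0, deriv f s ≠ 0) (hs : 0 < s) :
    HasDerivAt (pFlux n p g j f) (pFluxDeriv n p g j f s) s :=
  hasDerivAt_pFlux hsol hs ((hg.differentiableOn one_ne_zero).differentiableAt (Ioi_mem_nhds hs))
    ((hj.differentiableOn one_ne_zero).differentiableAt (Ioi_mem_nhds (hfpos s hs)))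
    ((hf.differentiableOn two_ne_zero).differentiableAt (Ioi_mem_nhds hs))
    (((hf.deriv_of_isOpen (m := 1) isOpen_Ioi le_rfl).differentiableOn one_ne_zero).differentiableAt
      (Ioi_mem_nhds hs))
    (hgpos s hs).ne' (energyDensitySq_pos (hf' s hs))

lemma pow_mul_deriv_rpow_le_pFlux (hp : 2 ≤ p) (hg : 0 < g s) (hf' : 0 < deriv f s) :
    g s ^ n * deriv f s ^ (p - 1) ≤ pFlux n p g j f s := by
  have hU : deriv f s ^ (p - 2) ≤ energyDensitySq n g j f s ^ ((p - 2) / 2) := by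
    rw [← sq_rpow_div_two hf'.le]
    exact rpow_le_rpow (sq_nonneg _) sq_deriv_le_energyDensitySq (by linarith)
  rw [show p - 1 = (p - 2) + 1 by ring, rpow_add hf', rpow_one, pFlux, mul_assoc]
  gcongr

/-- Interpolation with `θ = (p-2)/(p-1)`: `f'^(p-2) ≤ (H / g^n)^θ` and `H^θ ≤ c^(θ-1) H`. -/
lemma rpow_mul_deriv_rpow_le_pFlux {c : ℝ} (hp : 2 ≤ p) (hpn : p ≤ n + 1) (hg : 1 ≤ g s)
    (hf' : 0 < deriv f s) (hc : 0 < c) (hcH : c ≤ pFlux n p g j f s) :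
    g s ^ ((n : ℝ) - 2) * deriv f s ^ (p - 2) ≤
      c ^ ((p - 2) / (p - 1) - 1) * pFlux n p g j f s * g s ^ ((n : ℝ) - p) := by
  set H := pFlux n p g j f s
  set θ := (p - 2) / (p - 1)
  have hg0 : 0 < g s := one_pos.trans_le hg
  have hH : 0 < H := hc.trans_le hcH
  have hθ : 0 ≤ θ := div_nonneg (by linarith) (by linarith)
  have hθ1 : θ ≤ 1 := div_le_one_of_le₀ (by linarith) (by linarith)
  have hnθ : p - 2 ≤ n * θ := by
    rw [mul_div_assoc', le_div_iff₀ (by linarith)]; nlinarith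
  have hU : deriv f s ^ (p - 2) ≤ H ^ θ / g s ^ (n * θ) := by
    have hGU := pow_mul_deriv_rpow_le_pFlux (n := n) (j := j) hp hg0 hf'
    calc deriv f s ^ (p - 2) = (deriv f s ^ (p - 1)) ^ θ := by
          rw [← rpow_mul hf'.le, mul_div_cancel₀ _ (by linarith : p - 1 ≠ 0)]
      _ ≤ (H / g s ^ n) ^ θ :=
          rpow_le_rpow (by positivity) (by rw [le_div_iff₀ (by positivity)]; linarith) hθ
      _ = H ^ θ / g s ^ (n * θ) := by
          rw [div_rpow hH.le (by positivity), ← rpow_natCast, ← rpow_mul hg0.le]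
  have hH' : H ^ θ ≤ c ^ (θ - 1) * H := by
    rw [← div_le_iff₀ hH, ← rpow_sub_one hH.ne']
    exact rpow_le_rpow_of_nonpos hc hcH (by linarith)
  have hG : g s ^ ((n : ℝ) - 2) / g s ^ (n * θ) ≤ g s ^ ((n : ℝ) - p) := by
    rw [← rpow_sub hg0]; exact rpow_le_rpow_of_exponent_le hg (by linarith)
  calc g s ^ ((n : ℝ) - 2) * deriv f s ^ (p - 2)
      ≤ g s ^ ((n : ℝ) - 2) * (H ^ θ / g s ^ (n * θ)) := by gcongr
    _ = H ^ θ * (g s ^ ((n : ℝ) - 2) / g s ^ (n * θ)) := by ring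
    _ ≤ c ^ (θ - 1) * H * g s ^ ((n : ℝ) - p) := by gcongr

lemma pFluxDeriv_le {a M c : ℝ} (hp : 2 ≤ p) (hpn : p ≤ n + 1) (hg : 1 ≤ g s)
    (hf' : 0 < deriv f s) (hJ : 0 ≤ j (f s)) (hJM : j (f s) ≤ M) (hj' : 0 ≤ deriv j (f s))
    (hj'a : deriv j (f s) ≤ a) (hc : 0 < c) (hcH : c ≤ pFlux n p g j f s) :
    pFluxDeriv n p g j f s ≤ n * (M * a) * 2 ^ ((p - 2) / 2) *
      (c ^ ((p - 2) / (p - 1) - 1) + (n * M ^ 2) ^ ((p - 2) / 2) / c) *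
        pFlux n p g j f s * g s ^ ((n : ℝ) - p) := by
  set H := pFlux n p g j f s
  have hg0 : 0 < g s := one_pos.trans_le hg
  have hGn : g s ^ n / g s ^ 2 = g s ^ ((n : ℝ) - 2) := by
    rw [rpow_sub hg0, rpow_natCast, rpow_two]
  have hGp : g s ^ ((n : ℝ) - 2) / g s ^ (p - 2) = g s ^ ((n : ℝ) - p) := by
    rw [← rpow_sub hg0]; ring_nf
  have hE := energyDensitySq_rpow_le (n := n) (j := j) (M := M) hp hg0 hf'.le
    (by rwa [abs_of_nonneg hJ])
  have hU := rpow_mul_deriv_rpow_le_pFlux hp hpn hg hf' hc hcH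
  have hHc : 1 ≤ H / c := (one_le_div hc).2 hcH
  have hM : 0 ≤ M := hJ.trans hJM
  have ha : 0 ≤ a := hj'.trans hj'a
  calc pFluxDeriv n p g j f s
      ≤ n * g s ^ ((n : ℝ) - 2) * (2 ^ ((p - 2) / 2) * (deriv f s ^ (p - 2)
          + (n * M ^ 2) ^ ((p - 2) / 2) / g s ^ (p - 2))) * (M * a) := by
        rw [pFluxDeriv, mul_div_assoc, hGn]
        gcongr
    _ = n * (M * a) * 2 ^ ((p - 2) / 2) * (g s ^ ((n : ℝ) - 2) * deriv f s ^ (p - 2)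
          + (n * M ^ 2) ^ ((p - 2) / 2) * g s ^ ((n : ℝ) - p) * 1) := by
        rw [← hGp]; ring
    _ ≤ n * (M * a) * 2 ^ ((p - 2) / 2) * (c ^ ((p - 2) / (p - 1) - 1) * H * g s ^ ((n : ℝ) - p)
          + (n * M ^ 2) ^ ((p - 2) / 2) * g s ^ ((n : ℝ) - p) * (H / c)) := by
        gcongr
    _ = _ := by ring

lemma rpow_mul_deriv_mul_le_pFlux {m : ℝ} (hp : 2 ≤ p) (hg : 0 < g s) (hf' : 0 < deriv f s)
    (hm : 0 ≤ m) (hmJ : m ≤ |j (f s)|) :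
    (n * m ^ 2) ^ ((p - 2) / 2) * g s ^ ((n : ℝ) + 1 - p) * (deriv f s * g s) ≤
      pFlux n p g j f s := by
  have hE : n * m ^ 2 / g s ^ 2 ≤ energyDensitySq n g j f s := by
    have hJ2 : m ^ 2 ≤ j (f s) ^ 2 := by simpa using pow_le_pow_left₀ hm hmJ 2
    unfold energyDensitySq
    have : (n : ℝ) * m ^ 2 / g s ^ 2 ≤ n * j (f s) ^ 2 / g s ^ 2 := by gcongr
    linarith [sq_nonneg (deriv f s)]
  have hEq : (n * m ^ 2) ^ ((p - 2) / 2) / g s ^ (p - 2) ≤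
      energyDensitySq n g j f s ^ ((p - 2) / 2) := by
    rw [← sq_rpow_div_two hg.le, ← div_rpow (by positivity) (by positivity)]
    exact rpow_le_rpow (by positivity) hE (by linarith)
  have hG : g s ^ ((n : ℝ) + 1 - p) * g s = g s ^ n / g s ^ (p - 2) := by
    rw [← rpow_add_one hg.ne', ← rpow_natCast, ← rpow_sub hg]; ring_nf
  calc (n * m ^ 2) ^ ((p - 2) / 2) * g s ^ ((n : ℝ) + 1 - p) * (deriv f s * g s)
      = g s ^ n * ((n * m ^ 2) ^ ((p - 2) / 2) / g s ^ (p - 2)) * deriv f s := by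
        rw [← mul_div_assoc, mul_comm (g s ^ n), mul_div_assoc, ← hG]; ring
    _ ≤ pFlux n p g j f s := by unfold pFlux; gcongr

lemma pFlux_mul_rpow_eq (δ : ℝ) (hs : 0 < s) (hg : 0 < g s) (hf' : deriv f s ≠ 0) :
    pFlux n p g j f s * (g s / s ^ δ) ^ (p - 2 - n) *
      (energyDensitySq n g j f s * g s ^ 2) ^ (-((p - 2) / 2)) =
        deriv f s * s ^ (δ * (n - p + 2)) := by
  have hE := energyDensitySq_pos (n := n) (g := g) (j := j) hf'
  have hG : g s ^ n * g s ^ (p - 2 - n) = g s ^ (p - 2) := by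
    rw [← rpow_natCast, ← rpow_add hg]; ring_nf
  have hS : s ^ (δ * (n - p + 2)) * s ^ (δ * (p - 2 - n)) = 1 := by
    rw [← rpow_add hs]; ring_nf; exact rpow_zero s
  rw [mul_rpow hE.le (by positivity), div_rpow hg.le (by positivity), ← rpow_mul hs.le,
    rpow_neg hE.le, ← neg_div, sq_rpow_div_two hg.le, rpow_neg hg.le, pFlux,
    eq_inv_of_mul_eq_one_left hS, ← hG]
  have : 0 < energyDensitySq n g j f s ^ ((p - 2) / 2) := by positivity
  have : 0 < s ^ (δ * (p - 2 - n)) := by positivity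
  have : 0 < g s ^ (p - 2) := by positivity
  field_simp

end

section
variable {n : ℕ} {p : ℝ} {g j f : ℝ → ℝ}

lemma exists_tendsto_pFlux {a C₁ δ M : ℝ} (hp : 2 ≤ p) (hnp : n < p) (hpn : p ≤ n + 1)
    (hγ : 1 < δ * (p - n)) (hC₁ : 0 < C₁)
    (hgasym : Tendsto (fun s => g s / (C₁ * s ^ δ)) atTop (𝓝 1))
    (hgpos : ∀ s > 0, 0 < g s) (hf' : ∀ s > 0, 0 < deriv f s) (hJ : ∀ s > 0, 0 ≤ j (f s))
    (hj' : ∀ s > 0, 0 ≤ deriv j (f s) ∧ deriv j (f s) ≤ a) (hJM : ∀ᶠ s in atTop, j (f s) ≤ M)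
    (hd : ∀ s > 0, HasDerivAt (pFlux n p g j f) (pFluxDeriv n p g j f s) s) :
    ∃ l, 0 < l ∧ Tendsto (pFlux n p g j f) atTop (𝓝 l) := by
  have hδ : 0 < δ := pos_of_mul_pos_left (one_pos.trans hγ) (sub_pos.2 hnp).le
  have hmono : MonotoneOn (pFlux n p g j f) (Ioi 0) :=
    monotoneOn_Ioi_of_hasDerivAt_nonneg hd fun s hs => by
      have := hgpos s hs
      have := energyDensitySq_pos (n := n) (g := g) (j := j) (hf' s hs).ne'
      have := hJ s hs
      have := (hj' s hs).1
      unfold pFluxDeriv; positivity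
  set c := pFlux n p g j f 1
  have hc : 0 < c := pFlux_pos (hgpos 1 one_pos) (hf' 1 one_pos)
  have hM : 0 ≤ M := by
    obtain ⟨s, hsM, hs⟩ := (hJM.and (eventually_gt_atTop 0)).exists
    exact (hJ s hs).trans hsM
  have ha : 0 ≤ a := (hj' 1 one_pos).1.trans (hj' 1 one_pos).2
  set K := n * (M * a) * 2 ^ ((p - 2) / 2) *
    (c ^ ((p - 2) / (p - 1) - 1) + (n * M ^ 2) ^ ((p - 2) / 2) / c)
  have hle : ∀ᶠ s in atTop, pFluxDeriv n p g j f s ≤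
      K * (C₁ / 2) ^ ((n : ℝ) - p) * s ^ (-(δ * (p - n))) * pFlux n p g j f s := by
    filter_upwards [eventually_ge_atTop 1,
      (tendsto_atTop_of_tendsto_div_rpow hC₁ hδ hgasym).eventually_ge_atTop 1,
      eventually_rpow_le_of_tendsto_div_rpow hC₁ (sub_nonpos.2 hnp.le) hgasym, hJM]
      with s hs hg1 hgβ hsM
    have hs0 : 0 < s := one_pos.trans_le hs
    have hcH : c ≤ pFlux n p g j f s := hmono (mem_Ioi.2 one_pos) hs0 hs
    have := pFlux_pos (n := n) (p := p) (j := j) (hgpos s hs0) (hf' s hs0)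
    calc pFluxDeriv n p g j f s ≤ K * pFlux n p g j f s * g s ^ ((n : ℝ) - p) :=
          pFluxDeriv_le hp hpn hg1 (hf' s hs0) (hJ s hs0) hsM (hj' s hs0).1 (hj' s hs0).2 hc hcH
      _ ≤ K * pFlux n p g j f s * ((C₁ / 2) ^ ((n : ℝ) - p) * s ^ (δ * ((n : ℝ) - p))) := by
          gcongr
      _ = _ := by ring_nf
  obtain ⟨s₀, hs₀⟩ := eventually_atTop.1 hle
  have hs₁ : 0 < max s₀ 1 := lt_max_of_lt_right one_pos
  exact exists_tendsto_of_hasDerivAt_le_mul_rpow hs₁ hγ (by positivity)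
    (hmono.mono fun s hs => hs₁.trans_le hs) (pFlux_pos (hgpos _ hs₁) (hf' _ hs₁))
    (fun s hs => hd s (hs₁.trans_le hs)) fun s hs => hs₀ s (le_of_max_le_left hs)

lemma tendsto_deriv_mul_zero {m l : ℝ} (hn : n ≠ 0) (hp : 2 ≤ p) (hpn : p < n + 1) (hm : 0 < m)
    (hg : Tendsto g atTop atTop) (hf' : ∀ᶠ s in atTop, 0 < deriv f s)
    (hJ : ∀ᶠ s in atTop, m ≤ |j (f s)|) (hflux : ∀ᶠ s in atTop, pFlux n p g j f s ≤ l) :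
    Tendsto (fun s => deriv f s * g s) atTop (𝓝 0) := by
  have hnm : 0 < ((n : ℝ) * m ^ 2) ^ ((p - 2) / 2) := by positivity
  have hlim : Tendsto (fun s => l / ((n : ℝ) * m ^ 2) ^ ((p - 2) / 2) *
      g s ^ (-((n : ℝ) + 1 - p))) atTop (𝓝 0) := by
    have := ((tendsto_rpow_neg_atTop (y := (n : ℝ) + 1 - p) (by linarith)).comp hg).const_mul
      (l / ((n : ℝ) * m ^ 2) ^ ((p - 2) / 2))
    rwa [mul_zero] at this
  refine tendsto_of_tendsto_of_tendsto_of_le_of_le' tendsto_const_nhds hlim ?_ ?_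
  · filter_upwards [hf', hg.eventually_gt_atTop 0] with s hfs hgs
    positivity
  · filter_upwards [hf', hg.eventually_gt_atTop 0, hJ, hflux] with s hfs hgs hJs hls
    have key := (rpow_mul_deriv_mul_le_pFlux hp hgs hfs hm.le hJs).trans hls
    rw [rpow_neg hgs.le, ← div_eq_mul_inv, le_div_iff₀ (by positivity), le_div_iff₀ hnm]
    linarith

lemma tendsto_energyDensitySq_mul_sq {J : ℝ} (hgpos : ∀ᶠ s in atTop, 0 < g s)
    (hfg : Tendsto (fun s => deriv f s * g s) atTop (𝓝 0))
    (hJ : Tendsto (fun s => j (f s)) atTop (𝓝 J)) :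
    Tendsto (fun s => energyDensitySq n g j f s * g s ^ 2) atTop (𝓝 (n * J ^ 2)) := by
  have := (hfg.pow 2).add ((hJ.pow 2).const_mul (n : ℝ))
  rw [zero_pow two_ne_zero, zero_add] at this
  refine this.congr' ?_
  filter_upwards [hgpos] with s hs
  exact (energyDensitySq_mul_sq hs.ne').symm

end

theorem asymptotic_deriv_general (n : ℕ) (p a C₁ δ : ℝ) (g j f : ℝ → ℝ)
    (hn : 2 ≤ n) (hp₁ : max 2 (n : ℝ) < p) (hp₂ : p < (n : ℝ) + 1)
    (hC₁ : 0 < C₁) (hδ : (p - (n : ℝ))⁻¹ < δ)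
    (hg : ContDiffOn ℝ 1 g (Set.Ioi 0)) (hj : ContDiffOn ℝ 1 j (Set.Ioi 0))
    (hgpos : ∀ s > (0:ℝ), 0 < g s) (hjpos : ∀ t > (0:ℝ), 0 < j t)
    (hj' : ∀ t > (0:ℝ), 0 < deriv j t ∧ deriv j t ≤ a)
    (hgasym : Tendsto (fun s => g s / (C₁ * s ^ δ)) atTop (𝓝 1))
    (hf : ContDiffOn ℝ 2 f (Set.Ici 0))
    (hfbdd : ∃ B, ∀ s ≥ (0:ℝ), |f s| ≤ B)
    (hfpos : ∀ s > (0:ℝ), 0 < f s) (hf'pos : ∀ s > (0:ℝ), 0 < deriv f s)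
    (hsol : SolvesPHarmonic n p g j f) :
    ∃ D : ℝ, 0 < D ∧
      Tendsto (fun s : ℝ => deriv f s * s ^ (δ * ((n : ℝ) - p + 2))) atTop (𝓝 D) := by
  obtain ⟨B, hB⟩ := hfbdd
  have hp : 2 ≤ p := (le_max_left _ _).trans hp₁.le
  have hnp : (n : ℝ) < p := (le_max_right _ _).trans_lt hp₁
  have hγ : 1 < δ * (p - n) := by rwa [inv_lt_iff_one_lt_mul₀ (sub_pos.2 hnp)] at hδ
  have hδ₀ : 0 < δ := pos_of_mul_pos_left (one_pos.trans hγ) (sub_pos.2 hnp).le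
  have hfI : ContDiffOn ℝ 2 f (Ioi 0) := hf.mono Ioi_subset_Ici_self
  obtain ⟨L, hL, hfL⟩ := exists_pos_tendsto_of_deriv_nonneg (hfI.differentiableOn two_ne_zero)
    (fun s hs => (hf'pos s hs).le) hfpos fun s hs => le_of_abs_le (hB s hs.le)
  have hjL := hjpos L hL
  have hJ : Tendsto (fun s => j (f s)) atTop (𝓝 (j L)) :=
    (hj.continuousOn.continuousAt (Ioi_mem_nhds hL)).tendsto.comp hfL
  obtain ⟨l, hl, hflux⟩ := exists_tendsto_pFlux hp hnp hp₂.le hγ hC₁ hgasym hgpos hf'pos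
    (fun s hs => (hjpos _ (hfpos s hs)).le)
    (fun s hs => ⟨(hj' _ (hfpos s hs)).1.le, (hj' _ (hfpos s hs)).2⟩)
    (hJ.eventually_le_const (lt_add_one _))
    fun s => hasDerivAt_pFlux_of_contDiffOn hsol hg hj hfI hgpos hfpos fun t ht => (hf'pos t ht).ne'
  have hgtop := tendsto_atTop_of_tendsto_div_rpow hC₁ hδ₀ hgasym
  have hfg : Tendsto (fun s => deriv f s * g s) atTop (𝓝 0) :=
    tendsto_deriv_mul_zero (by omega) hp hp₂ (half_pos hjL) hgtop
      ((eventually_gt_atTop 0).mono hf'pos)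
      ((hJ.eventually_const_le (half_lt_self hjL)).mono fun s hs => hs.trans (le_abs_self _))
      (hflux.eventually_le_const (lt_add_one l))
  have hE := tendsto_energyDensitySq_mul_sq (n := n) (hgtop.eventually_gt_atTop 0) hfg hJ
  refine ⟨l * C₁ ^ (p - 2 - n) * (n * j L ^ 2) ^ (-((p - 2) / 2)), by positivity,
    (((hflux.mul ((tendsto_div_rpow_of_tendsto_div_rpow hC₁ hgasym).rpow_const
      (Or.inl hC₁.ne'))).mul (hE.rpow_const (Or.inl (by positivity)))).congr' ?_)⟩
  filter_upwards [eventually_gt_atTop 0] with s hs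
  exact pFlux_mul_rpow_eq δ hs (hgpos s hs) (hf'pos s hs).ne'

/-- **Lemma 2.4** (asymptotic estimate). Under hypotheses (H), every positive solution of
the rotationally symmetric `p`-harmonic equation satisfies
`f'(s) ~ D · s^{-δ(n-(p-2))}` as `s → +∞`, for some constant `D > 0`. -/
theorem asymptotic_deriv (n : ℕ) (p a C₁ δ : ℝ) (g j f : ℝ → ℝ)
    (hn : 2 ≤ n) (hp₁ : max 2 (n : ℝ) < p) (hp₂ : p < (n : ℝ) + 1)
    (ha : 0 < a) (hC₁ : 0 < C₁) (hδ : (p - (n : ℝ))⁻¹ < δ)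
    (hg : ContDiffOn ℝ 1 g (Set.Ioi 0)) (hj : ContDiffOn ℝ 1 j (Set.Ioi 0))
    (hg0 : g 0 = 0) (hj0 : j 0 = 0)
    (hg'0 : HasDerivWithinAt g 1 (Set.Ici 0) 0) (hj'0 : HasDerivWithinAt j 1 (Set.Ici 0) 0)
    (hgpos : ∀ s > (0:ℝ), 0 < g s) (hjpos : ∀ t > (0:ℝ), 0 < j t)
    (hj' : ∀ t > (0:ℝ), 0 < deriv j t ∧ deriv j t ≤ a)
    (hg' : ∀ᶠ s in atTop, 0 < deriv g s)
    (hgasym : Tendsto (fun s => g s / (C₁ * s ^ δ)) atTop (𝓝 1))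
    (hf : ContDiffOn ℝ 2 f (Set.Ici 0))
    (hfbdd : ∃ B, ∀ s ≥ (0:ℝ), |f s| ≤ B)
    (hf0 : f 0 = 0)
    (hfpos : ∀ s > (0:ℝ), 0 < f s) (hf'pos : ∀ s > (0:ℝ), 0 < deriv f s)
    (hsol : SolvesPHarmonic n p g j f) :
    ∃ D : ℝ, 0 < D ∧
      Tendsto (fun s : ℝ => deriv f s * s ^ (δ * ((n : ℝ) - p + 2))) atTop (𝓝 D) :=
  asymptotic_deriv_general n p a C₁ δ g j f hn hp₁ hp₂ hC₁ hδ hg hj hgpos hjpos hj' hgasym hf hfbdd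
    hfpos hf'pos hsol
end

section
/- Let n ≥ 2 be an integer and p a real number with max{2,n} < p < n+1, let δ > (p−n)⁻¹ and 0 < σ < 1, let g, j be the specific warping functions, and let f be a bounded, twice continuously differentiable solution of the rotationally symmetric p-harmonic equation with f(0) = 0 and f(s) > 0, f'(s) > 0 for all s > 0. Set A₂(s) = (p−2)·j(f(s))·[ g'(s)·f'(s)/g(s) + f''(s) ]. Then there exists a sequence s_k → +∞ such that A₂(s_k) < 0 for all k. -/
open Real Filter Topology

/-- The specific warping function `g(s) = (s + δ^{-1/(δ-1)})^δ - δ^{-δ/(δ-1)}`. -/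
noncomputable def warpG (δ : ℝ) (s : ℝ) : ℝ :=
  (s + δ ^ (-(1 / (δ - 1)))) ^ δ - δ ^ (-(δ / (δ - 1)))

/-- The specific warping function `j(t) = (t + σ^{1/(1-σ)})^σ - σ^{σ/(1-σ)}`. -/
noncomputable def warpJ (σ : ℝ) (t : ℝ) : ℝ :=
  (t + σ ^ (1 / (1 - σ))) ^ σ - σ ^ (σ / (1 - σ))

/-!
Write `X = g'f' + g f''`, so that `A₂ = (p-2) j(f) X / g`. If `A₂ ≥ 0` from some point on,
then `g f'` is nondecreasing there, hence `g f' ≥ c > 0`. Multiplied out, the `p`-harmonic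
equation reads `X (E + (p-2) f'²g²) g = (p-1-n) E g' f' g + n j j' (E - (p-2) f'²g²)` with
`E = f'²g² + n j²`; as `X ≥ 0`, `p ≥ 2` and `j, j' ≥ 0`, this forces
`(n+1-p) c g' ≤ n j(f) j'(f)`.
The right side is bounded because `f` is, while `g'(s) ~ δ s^{δ-1} → ∞`.
-/

theorem monotoneOn_Ici_of_deriv_nonneg {u : ℝ → ℝ} {S : ℝ}
    (h : ∀ x ≥ S, DifferentiableAt ℝ u x ∧ 0 ≤ deriv u x) : MonotoneOn u (Set.Ici S) :=
  monotoneOn_of_deriv_nonneg (convex_Ici S)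
    (fun x hx => (h x hx).1.continuousAt.continuousWithinAt)
    (fun x hx => (h x (interior_subset hx)).1.differentiableWithinAt)
    fun x hx => (h x (interior_subset hx)).2

namespace SolvesPHarmonic

variable {n : ℕ} {p : ℝ} {g j f : ℝ → ℝ}

theorem deriv_mul_mul_le (hsol : SolvesPHarmonic n p g j f) (hp : 2 ≤ p) {s : ℝ} (hs : 0 < s)
    (hg : 0 < g s) (hf' : 0 < deriv f s) (hjj : 0 ≤ j (f s) * deriv j (f s))
    (hX : 0 ≤ deriv g s * deriv f s + g s * deriv (deriv f) s) :
    ((n : ℝ) + 1 - p) * deriv g s * (g s * deriv f s) ≤ n * (j (f s) * deriv j (f s)) := by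
  have hE : 0 < energyDensitySq n g j f s := by unfold energyDensitySq; positivity
  have hode := hsol s hs hE
  unfold energyDensitySq at hode
  set F₁ := deriv f s
  set F₂ := deriv (deriv f) s
  set G := g s
  set G' := deriv g s
  set J := j (f s)
  set J' := deriv j (f s)
  set E := F₁ ^ 2 * G ^ 2 + n * J ^ 2
  have hEpos : 0 < E := by positivity
  have identity : (G' * F₁ + G * F₂) * (E + (p - 2) * F₁ ^ 2 * G ^ 2) * G
      = (p - 1 - n) * E * G' * F₁ * G + n * J * J' * (E - (p - 2) * F₁ ^ 2 * G ^ 2) := by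
    field_simp at hode
    refine mul_right_cancel₀ (pow_ne_zero 3 hg.ne') ?_
    linear_combination G ^ 3 * hode
  have hlhs : 0 ≤ (G' * F₁ + G * F₂) * (E + (p - 2) * F₁ ^ 2 * G ^ 2) * G := by
    have : 0 ≤ (p - 2) * F₁ ^ 2 * G ^ 2 := by have := sub_nonneg.mpr hp; positivity
    exact mul_nonneg (mul_nonneg hX (by linarith)) hg.le
  have hcorr : 0 ≤ n * (J * J') * ((p - 2) * F₁ ^ 2 * G ^ 2) := by
    have := sub_nonneg.mpr hp; positivity
  refine le_of_mul_le_mul_right ?_ hEpos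
  nlinarith [identity, hlhs, hcorr]

theorem frequently_neg_of_tendsto_deriv_atTop (hsol : SolvesPHarmonic n p g j f) (hp₁ : 2 ≤ p)
    (hp₂ : p < n + 1) (hg : ∀ᶠ s in atTop, 0 < g s ∧ DifferentiableAt ℝ g s)
    (hg' : Tendsto (deriv g) atTop atTop)
    (hf : ∀ᶠ s in atTop, 0 < deriv f s ∧ DifferentiableAt ℝ (deriv f) s)
    (hjj : ∀ᶠ s in atTop, 0 ≤ j (f s) * deriv j (f s))
    (hjj_bdd : IsBoundedUnder (· ≤ ·) atTop fun s => j (f s) * deriv j (f s)) :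
    ∃ᶠ s in atTop, deriv g s * deriv f s + g s * deriv (deriv f) s < 0 := by
  intro hX
  obtain ⟨M, hM⟩ := hjj_bdd
  obtain ⟨S, hS⟩ := eventually_atTop.mp
    ((eventually_gt_atTop 0).and (hX.and (hg.and (hf.and (hjj.and (eventually_map.mp hM))))))
  have hmono : MonotoneOn (fun s => g s * deriv f s) (Set.Ici S) := by
    refine monotoneOn_Ici_of_deriv_nonneg fun s hs => ?_
    obtain ⟨-, hXs, ⟨-, hgd⟩, ⟨-, hfd⟩, -⟩ := hS s hs
    exact ⟨hgd.mul hfd, (deriv_fun_mul hgd hfd).symm ▸ not_lt.mp hXs⟩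
  set c := g S * deriv f S
  have hc : 0 < c := by
    obtain ⟨-, -, ⟨hgS, -⟩, ⟨hfS, -⟩, -⟩ := hS S le_rfl
    exact mul_pos hgS hfS
  have hq : 0 < ((n : ℝ) + 1 - p) * c := mul_pos (by linarith) hc
  obtain ⟨s, hs_large, hg's, hsS⟩ :=
    ((hg'.eventually_gt_atTop (n * M / (((n : ℝ) + 1 - p) * c))).and
      ((hg'.eventually_ge_atTop 0).and (eventually_ge_atTop S))).exists
  obtain ⟨hs0, hXs, ⟨hgs, -⟩, ⟨hf's, -⟩, hjjs, hMs⟩ := hS s hsS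
  have hupper : ((n : ℝ) + 1 - p) * c * deriv g s ≤ n * M :=
    calc ((n : ℝ) + 1 - p) * c * deriv g s = ((n : ℝ) + 1 - p) * deriv g s * c := by ring
      _ ≤ ((n : ℝ) + 1 - p) * deriv g s * (g s * deriv f s) :=
        mul_le_mul_of_nonneg_left (hmono Set.self_mem_Ici hsS hsS)
          (mul_nonneg (by linarith) hg's)
      _ ≤ n * (j (f s) * deriv j (f s)) :=
        deriv_mul_mul_le hsol hp₁ hs0 hgs hf's hjjs (not_lt.mp hXs)
      _ ≤ n * M := mul_le_mul_of_nonneg_left hMs (Nat.cast_nonneg n)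
  rw [div_lt_iff₀ hq] at hs_large
  linarith

end SolvesPHarmonic

noncomputable def shiftedRpow (a r t : ℝ) : ℝ :=
  (t + a) ^ r - a ^ r

section shiftedRpow

variable {a r t : ℝ}

theorem warpG_eq_shiftedRpow {δ : ℝ} (hδ : 0 ≤ δ) :
    warpG δ = shiftedRpow (δ ^ (-(1 / (δ - 1)))) δ := by
  ext s
  rw [warpG, shiftedRpow, ← rpow_mul hδ]
  congr 3
  ring

theorem warpJ_eq_shiftedRpow {σ : ℝ} (hσ : 0 ≤ σ) :
    warpJ σ = shiftedRpow (σ ^ (1 / (1 - σ))) σ := by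
  ext t
  rw [warpJ, shiftedRpow, ← rpow_mul hσ]
  congr 3
  ring

theorem hasDerivAt_shiftedRpow (ht : 0 < t + a) :
    HasDerivAt (shiftedRpow a r) (r * (t + a) ^ (r - 1)) t := by
  have h := (((hasDerivAt_id t).add_const a).rpow_const (p := r) (Or.inl ht.ne')).sub_const (a ^ r)
  rwa [id, one_mul] at h

theorem deriv_shiftedRpow (ht : 0 < t + a) :
    deriv (shiftedRpow a r) t = r * (t + a) ^ (r - 1) :=
  (hasDerivAt_shiftedRpow ht).deriv

theorem shiftedRpow_pos (ha : 0 ≤ a) (hr : 0 < r) (ht : 0 < t) : 0 < shiftedRpow a r t :=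
  sub_pos.mpr (rpow_lt_rpow ha (by linarith) hr)

theorem shiftedRpow_le_shiftedRpow (ha : 0 ≤ a) (hr : 0 ≤ r) (ht : 0 ≤ t) {u : ℝ} (htu : t ≤ u) :
    shiftedRpow a r t ≤ shiftedRpow a r u :=
  sub_le_sub_right (rpow_le_rpow (by linarith) (by linarith) hr) _

theorem shiftedRpow_nonneg (ha : 0 ≤ a) (hr : 0 ≤ r) (ht : 0 ≤ t) : 0 ≤ shiftedRpow a r t :=
  sub_nonneg.mpr (rpow_le_rpow ha (by linarith) hr)

theorem shiftedRpow_mul_deriv_nonneg (ha : 0 < a) (hr : 0 ≤ r) (ht : 0 ≤ t) :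
    0 ≤ shiftedRpow a r t * deriv (shiftedRpow a r) t := by
  have := shiftedRpow_nonneg ha.le hr ht
  rw [deriv_shiftedRpow (by linarith)]
  have : 0 < t + a := by linarith
  positivity

theorem shiftedRpow_mul_deriv_le (ha : 0 < a) (hr₀ : 0 ≤ r) (hr₁ : r ≤ 1) (ht : 0 ≤ t) {B : ℝ}
    (htB : t ≤ B) :
    shiftedRpow a r t * deriv (shiftedRpow a r) t ≤ shiftedRpow a r B * (r * a ^ (r - 1)) := by
  rw [deriv_shiftedRpow (by linarith)]
  have : 0 < t + a := by linarith
  exact mul_le_mul (shiftedRpow_le_shiftedRpow ha.le hr₀ ht htB)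
    (mul_le_mul_of_nonneg_left (rpow_le_rpow_of_nonpos ha (by linarith) (by linarith)) hr₀)
    (by positivity) (shiftedRpow_nonneg ha.le hr₀ (ht.trans htB))

theorem tendsto_deriv_shiftedRpow_atTop (hr : 1 < r) :
    Tendsto (deriv (shiftedRpow a r)) atTop atTop := by
  have h : Tendsto (fun t => r * (t + a) ^ (r - 1)) atTop atTop :=
    ((tendsto_rpow_atTop (by linarith)).comp (tendsto_atTop_add_const_right _ a tendsto_id))
      |>.const_mul_atTop (by linarith)
  refine h.congr' ?_
  filter_upwards [eventually_gt_atTop (-a)] with t ht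
  rw [deriv_shiftedRpow (by linarith)]

end shiftedRpow

theorem SolvesPHarmonic.frequently_neg_of_shiftedRpow {n : ℕ} {p a b δ σ B : ℝ} {f : ℝ → ℝ}
    (hsol : SolvesPHarmonic n p (shiftedRpow a δ) (shiftedRpow b σ) f) (hp₁ : 2 ≤ p)
    (hp₂ : p < n + 1) (ha : 0 ≤ a) (hb : 0 < b) (hδ : 1 < δ) (hσ₀ : 0 ≤ σ) (hσ₁ : σ ≤ 1)
    (hf : ∀ᶠ s in atTop, 0 ≤ f s ∧ f s ≤ B)
    (hf' : ∀ᶠ s in atTop, 0 < deriv f s ∧ DifferentiableAt ℝ (deriv f) s) :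
    ∃ᶠ s in atTop,
      deriv (shiftedRpow a δ) s * deriv f s + shiftedRpow a δ s * deriv (deriv f) s < 0 :=
  hsol.frequently_neg_of_tendsto_deriv_atTop hp₁ hp₂
    ((eventually_gt_atTop 0).mono fun s hs => ⟨shiftedRpow_pos ha (by linarith) hs,
      (hasDerivAt_shiftedRpow (by linarith)).differentiableAt⟩)
    (tendsto_deriv_shiftedRpow_atTop hδ) hf'
    (hf.mono fun s hs => shiftedRpow_mul_deriv_nonneg hb hσ₀ hs.1)
    (isBoundedUnder_of_eventually_le
      (hf.mono fun s hs => shiftedRpow_mul_deriv_le hb hσ₀ hσ₁ hs.1 hs.2))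

theorem A2_negative_sequence_general (n : ℕ) (p δ σ : ℝ) (f : ℝ → ℝ)
    (hp₁ : max 2 (n : ℝ) < p) (hp₂ : p < (n : ℝ) + 1)
    (hδ : (p - (n : ℝ))⁻¹ < δ) (hσ₀ : 0 < σ) (hσ₁ : σ < 1)
    (hf : ContDiffOn ℝ 2 f (Set.Ici 0))
    (hfbdd : ∃ B, ∀ s ≥ (0:ℝ), |f s| ≤ B)
    (hfpos : ∀ s > (0:ℝ), 0 < f s) (hf'pos : ∀ s > (0:ℝ), 0 < deriv f s)
    (hsol : SolvesPHarmonic n p (warpG δ) (warpJ σ) f) :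
    ∃ sk : ℕ → ℝ, Tendsto sk atTop atTop ∧
      ∀ k : ℕ,
        (p - 2) * warpJ σ (f (sk k)) *
          (deriv (warpG δ) (sk k) * deriv f (sk k) / warpG δ (sk k)
            + deriv (deriv f) (sk k)) < 0 := by
  obtain ⟨B, hB⟩ := hfbdd
  have hp : 2 < p := (le_max_left _ _).trans_lt hp₁
  have hδ₁ : 1 < δ :=
    ((one_lt_inv₀ (sub_pos.mpr ((le_max_right _ _).trans_lt hp₁))).mpr (by linarith)).trans hδ
  rw [warpG_eq_shiftedRpow (by linarith), warpJ_eq_shiftedRpow hσ₀.le] at hsol ⊢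
  set a := δ ^ (-(1 / (δ - 1)))
  set b := σ ^ (1 / (1 - σ))
  have ha : 0 ≤ a := rpow_nonneg (by linarith) _
  have hb : 0 < b := rpow_pos_of_pos hσ₀ _
  have hf' : ContDiffOn ℝ 1 (deriv f) (Set.Ioi 0) :=
    (hf.mono Set.Ioi_subset_Ici_self).deriv_of_isOpen isOpen_Ioi (by norm_num)
  have hX := hsol.frequently_neg_of_shiftedRpow hp.le hp₂ ha hb hδ₁ hσ₀.le hσ₁.le (B := B)
    ((eventually_gt_atTop 0).mono fun s hs => ⟨(hfpos s hs).le, (le_abs_self _).trans (hB s hs.le)⟩)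
    ((eventually_gt_atTop 0).mono fun s hs => ⟨hf'pos s hs,
      (hf'.differentiableOn one_ne_zero s hs).differentiableAt (isOpen_Ioi.mem_nhds hs)⟩)
  obtain ⟨sk, hsk, hneg⟩ :=
    exists_seq_forall_of_frequently (hX.and_eventually (eventually_gt_atTop 0))
  refine ⟨sk, hsk, fun k => ?_⟩
  obtain ⟨hXk, hk⟩ := hneg k
  have hgk : 0 < shiftedRpow a δ (sk k) := shiftedRpow_pos ha (by linarith) hk
  rw [← mul_div_cancel_left₀ (deriv (deriv f) (sk k)) hgk.ne', ← add_div, ← mul_div_assoc]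
  exact div_neg_of_neg_of_pos (mul_neg_of_pos_of_neg
    (mul_pos (by linarith) (shiftedRpow_pos hb.le hσ₀ (hfpos _ hk))) hXk) hgk

/-- With the specific warping functions, the term
`A₂(s) = (p-2)·j(f(s))·[g'(s)·f'(s)/g(s) + f''(s)]` is negative along some sequence
`s_k → +∞`. -/
theorem A2_negative_sequence (n : ℕ) (p δ σ : ℝ) (f : ℝ → ℝ)
    (hn : 2 ≤ n) (hp₁ : max 2 (n : ℝ) < p) (hp₂ : p < (n : ℝ) + 1)
    (hδ : (p - (n : ℝ))⁻¹ < δ) (hσ₀ : 0 < σ) (hσ₁ : σ < 1)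
    (hf : ContDiffOn ℝ 2 f (Set.Ici 0))
    (hfbdd : ∃ B, ∀ s ≥ (0:ℝ), |f s| ≤ B)
    (hf0 : f 0 = 0)
    (hfpos : ∀ s > (0:ℝ), 0 < f s) (hf'pos : ∀ s > (0:ℝ), 0 < deriv f s)
    (hsol : SolvesPHarmonic n p (warpG δ) (warpJ σ) f) :
    ∃ sk : ℕ → ℝ, Tendsto sk atTop atTop ∧
      ∀ k : ℕ,
        (p - 2) * warpJ σ (f (sk k)) *
          (deriv (warpG δ) (sk k) * deriv f (sk k) / warpG δ (sk k)
            + deriv (deriv f) (sk k)) < 0 :=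
  A2_negative_sequence_general n p δ σ f hp₁ hp₂ hδ hσ₀ hσ₁ hf hfbdd hfpos hf'pos hsol
end
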